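/- Let G be a finite chordal graph with n vertices and S a clique of G. Then there exists an ordering v₁, …, vₙ of the vertices of G such that {v₁, …, v_k} = V \ S where k = |V \ S|, and for each i, v_i is a simplicial vertex of the induced subgraph of G on {v_i, v_{i+1}, …, vₙ}. -/

import Mathlib

/-!
For a clique `S ≠ V` of a chordal graph there is a simplicial vertex outside `S`; removing it and
recursing eliminates `V \ S` first. To find such a vertex when `G` is not complete, pick
non-adjacent `a`, `b`, let `B` be the component of `b` in `G - N[a]` and `K` the set of neighbours
of `a` adjacent to `B`. Two non-adjacent vertices of `K` would close a chordless cycle of length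
at least four with `a` and a shortest path through `B`, so `K` is a clique, and it separates `B`
from `A = V \ (B ∪ K) ∋ a`. Induction on `G[B ∪ K]` and `G[A ∪ K]` with the clique `K` gives
simplicial vertices in `B` and in `A`; they are not adjacent, so one of them avoids `S`.
-/

def SimpleGraph.IsSimplicialVertex {V : Type*} (G : SimpleGraph V) (v : V) : Prop :=
  G.IsClique (G.neighborSet v)

def SimpleGraph.IsChordal {V : Type*} (G : SimpleGraph V) : Prop :=
  ∀ (v : V) (w : G.Walk v v), w.IsCycle → 4 ≤ w.length →
    ∃ a b, a ∈ w.support ∧ b ∈ w.support ∧ G.Adj a b ∧ s(a, b) ∉ w.edges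

def SimpleGraph.IsPEO {V : Type*} [Fintype V] (G : SimpleGraph V)
    (e : Fin (Fintype.card V) ≃ V) : Prop :=
  ∀ i : Fin (Fintype.card V),
    (G.induce {x | ∃ j, i ≤ j ∧ e j = x}).IsSimplicialVertex ⟨e i, ⟨i, le_refl i, rfl⟩⟩

theorem Equiv.exists_extend_fin_succ {V : Type*} {n : ℕ} (v : V) (e' : Fin n ≃ {x | x ≠ v}) :
    ∃ e : Fin (n + 1) ≃ V, e 0 = v ∧ ∀ i, e i.succ = e' i := by
  classical
  exact ⟨(finSuccEquiv n).trans (e'.optionCongr.trans (Equiv.optionSubtypeNe v)),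
    by simp; rfl, fun i => by simp; rfl⟩

theorem Equiv.apply_mem_iff_lt_ncard {V : Type*} {n : ℕ} (e : Fin n ≃ V) {P : Set V}
    (hP : ∀ ⦃i j⦄, i ≤ j → e j ∈ P → e i ∈ P) (i : Fin n) : e i ∈ P ↔ (i : ℕ) < P.ncard := by
  rw [← Set.ncard_preimage_of_injective_subset_range e.injective (by simp)]
  constructor
  · intro hi
    have := Set.ncard_le_ncard
      (show ↑(Finset.Iic i) ⊆ e ⁻¹' P from fun j hj => hP (Finset.mem_Iic.mp hj) hi)
    rw [Set.ncard_coe_finset, Fin.card_Iic] at this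
    omega
  · intro hi
    by_contra hiP
    have := Set.ncard_le_ncard (show e ⁻¹' P ⊆ ↑(Finset.Iio i) from
      fun j hj => Finset.mem_Iio.mpr (lt_of_not_ge fun hij => hiP (hP hij hj)))
    rw [Set.ncard_coe_finset, Fin.card_Iio] at this
    omega

namespace SimpleGraph

variable {V W : Type*} {G : SimpleGraph V} {H : SimpleGraph W}

namespace Walk

variable {u v : V}

theorem IsChordless.map {x y : W} {p : H.Walk x y} (hp : p.IsChordless) (f : H ↪g G) :
    (p.map f.toHom).IsChordless := by
  rw [isChordless_iff_forall_mem_edges] at hp ⊢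
  simp only [support_map, edges_map, List.mem_map]
  rintro _ _ ⟨x, hx, rfl⟩ ⟨y, hy, rfl⟩ hxy
  exact ⟨_, hp hx hy (f.map_adj_iff.mp hxy), rfl⟩

theorem isChordless_of_length_eq_dist {p : G.Walk u v} (hp : p.length = G.dist u v) :
    p.IsChordless := by
  have hdist : ∀ n ≤ p.length, G.dist u (p.getVert n) = n := fun n hn => by
    rw [← length_eq_dist_of_subwalk hp (p.isSubwalk_take n), take_length]
    omega
  rw [isChordless_iff_forall_mem_edges]
  intro x y hx hy hxy
  obtain ⟨i, rfl, hi⟩ := mem_support_iff_exists_getVert.mp hx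
  obtain ⟨j, rfl, hj⟩ := mem_support_iff_exists_getVert.mp hy
  have hji : j ≤ i + 1 := by
    simpa [hdist i hi, hdist j hj, hi] using dist_le ((p.take i).concat hxy)
  have hij : i ≤ j + 1 := by
    simpa [hdist i hi, hdist j hj, hj] using dist_le ((p.take j).concat hxy.symm)
  have hne : i ≠ j := by rintro rfl; exact hxy.ne rfl
  rw [mk_mem_edges_iff_exists]
  rcases (by omega : j = i + 1 ∨ i = j + 1) with rfl | rfl
  · exact ⟨i, by omega, rfl⟩
  · exact ⟨j, by omega, Sym2.eq_swap⟩

theorem exists_isPath_isChordless_of_support_subset (w : G.Walk u v) {s : Set V}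
    (hw : ∀ x ∈ w.support, x ∈ s) :
    ∃ p : G.Walk u v, p.IsPath ∧ p.IsChordless ∧ ∀ x ∈ p.support, x ∈ s := by
  obtain ⟨q, hq⟩ := (w.induce s hw).reachable.exists_walk_length_eq_dist
  refine ⟨q.map (Embedding.induce s).toHom, (q.isPath_of_length_eq_dist hq).map
    Subtype.coe_injective, (isChordless_of_length_eq_dist hq).map _, fun x hx => ?_⟩
  change x ∈ (q.map (Embedding.induce s).toHom).support at hx
  rw [support_map, List.mem_map] at hx
  obtain ⟨x, -, rfl⟩ := hx
  exact x.2

theorem IsChordless.cons_concat {a y y' : V} {p : G.Walk y y'} (hp : p.IsChordless)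
    (hay : G.Adj a y) (hy'a : G.Adj y' a)
    (ha : ∀ x ∈ p.support, G.Adj a x → x = y ∨ x = y') :
    (cons hay (p.concat hy'a)).IsChordless := by
  rw [isChordless_iff_forall_mem_edges] at hp ⊢
  simp only [support_cons, support_concat, edges_cons, edges_concat, List.concat_eq_append,
    List.mem_cons, List.mem_append, List.not_mem_nil, or_false]
  intro u w hu hw huw
  replace hu : u = a ∨ u ∈ p.support := by tauto
  replace hw : w = a ∨ w ∈ p.support := by tauto
  rcases hu with rfl | hu <;> rcases hw with rfl | hw
  · exact (huw.ne rfl).elim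
  · rcases ha w hw huw with rfl | rfl <;> simp [Sym2.eq_swap]
  · rcases ha u hu huw.symm with rfl | rfl <;> simp [Sym2.eq_swap]
  · exact .inr (.inl (hp hu hw huw))

end Walk

open Walk

theorem isChordal_iff_not_isChordless :
    G.IsChordal ↔ ∀ v (w : G.Walk v v), w.IsCycle → 4 ≤ w.length → ¬ w.IsChordless := by
  simp [IsChordal, isChordless_iff_forall_mem_edges]

theorem IsChordal.comap (f : H ↪g G) (hG : G.IsChordal) : H.IsChordal := by
  rw [isChordal_iff_not_isChordless] at hG ⊢
  intro v w hc h4 hcl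
  exact hG _ (w.map f.toHom) (hc.map f.injective) (by rwa [length_map]) (hcl.map f)

theorem IsChordal.induce (hG : G.IsChordal) (s : Set V) : (G.induce s).IsChordal :=
  hG.comap (Embedding.induce s)

theorem IsChordal.adj_of_isChordless {a y y' : V} (hG : G.IsChordal) {p : G.Walk y y'}
    (hp : p.IsPath) (hpc : p.IsChordless) (hne : y ≠ y') (ha : a ∉ p.support)
    (hay : G.Adj a y) (hay' : G.Adj a y') (hN : ∀ x ∈ p.support, G.Adj a x → x = y ∨ x = y') :
    G.Adj y y' := by
  by_contra hyy'
  have hlen : 1 < p.length :=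
    (p.reachable.one_lt_dist_of_ne_of_not_adj hne hyy').trans_le (dist_le p)
  refine isChordal_iff_not_isChordless.mp hG a (cons hay (p.concat hay'.symm)) ?_
    (by simp; omega) (hpc.cons_concat hay hay'.symm hN)
  rw [cons_isCycle_iff, edges_concat, List.concat_eq_append, List.mem_append,
    List.mem_singleton, Sym2.eq_iff]
  refine ⟨hp.concat ha hay'.symm, ?_⟩
  rintro (h | ⟨rfl, -⟩ | ⟨-, rfl⟩)
  · exact ha (p.fst_mem_support_of_mem_edges h)
  · exact hay'.ne rfl
  · exact hne rfl

theorem IsChordal.isClique_of_walks_avoiding (hG : G.IsChordal) {a : V} {B : Set V}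
    (hB : ∀ z ∈ B, ∀ z' ∈ B, ∃ w : G.Walk z z', ∀ x ∈ w.support, x ≠ a ∧ ¬G.Adj a x) :
    G.IsClique {y | G.Adj a y ∧ ∃ z ∈ B, G.Adj y z} := by
  rintro y ⟨hay, z, hz, hyz⟩ y' ⟨hay', z', hz', hy'z'⟩ hne
  obtain ⟨w, hw⟩ := hB z hz z' hz'
  obtain ⟨p, hp, hpc, hps⟩ :=
    (cons hyz (w.concat hy'z'.symm)).exists_isPath_isChordless_of_support_subset
      (s := {x | x = y ∨ x = y' ∨ (x ≠ a ∧ ¬G.Adj a x)}) (by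
        simp only [support_cons, support_concat, List.mem_cons, List.mem_append,
          List.not_mem_nil, or_false]
        rintro x (rfl | hx | rfl)
        exacts [.inl rfl, .inr (.inr (hw x hx)), .inr (.inl rfl)])
  refine hG.adj_of_isChordless hp hpc hne (fun ha => ?_) hay hay' (fun x hx hax => ?_)
  · rcases hps a ha with h | h | h
    exacts [hay.ne h, hay'.ne h, h.1 rfl]
  · rcases hps x hx with h | h | h
    exacts [.inl h, .inr h, (h.2 hax).elim]

theorem IsChordal.exists_clique_separator (hG : G.IsChordal) {a b : V} (hab : a ≠ b)
    (hnadj : ¬G.Adj a b) :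
    ∃ B K : Set V, G.IsClique K ∧ b ∈ B ∧ b ∉ K ∧ a ∉ B ∪ K ∧
      ∀ z ∈ B, G.neighborSet z ⊆ B ∪ K := by
  set B := {z | ∃ w : G.Walk b z, ∀ x ∈ w.support, x ≠ a ∧ ¬G.Adj a x}
  have hBa : ∀ z ∈ B, z ≠ a ∧ ¬G.Adj a z := fun z ⟨w, hw⟩ => hw z w.end_mem_support
  refine ⟨B, {y | G.Adj a y ∧ ∃ z ∈ B, G.Adj y z}, hG.isClique_of_walks_avoiding ?_,
    ⟨nil, by simpa using ⟨hab.symm, hnadj⟩⟩, fun hb => hnadj hb.1, ?_, ?_⟩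
  · rintro z ⟨w, hw⟩ z' ⟨w', hw'⟩
    refine ⟨w.reverse.append w', fun x hx => ?_⟩
    rw [mem_support_append_iff, support_reverse, List.mem_reverse] at hx
    exact hx.elim (hw x) (hw' x)
  · rintro (h | h)
    exacts [(hBa a h).1 rfl, h.1.ne rfl]
  · rintro z ⟨w, hw⟩ x (hzx : G.Adj z x)
    by_cases hx : x ≠ a ∧ ¬G.Adj a x
    · refine .inl ⟨w.concat hzx, fun t ht => ?_⟩
      rw [support_concat, List.mem_append, List.mem_singleton] at ht
      exact ht.elim (hw t) (fun h => h ▸ hx)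
    · refine .inr ⟨?_, z, ⟨w, hw⟩, hzx.symm⟩
      obtain rfl | hxa := eq_or_ne x a
      · exact ((hw z w.end_mem_support).2 hzx.symm).elim
      · exact not_and_not_right.mp hx hxa

theorem IsSimplicialVertex.of_induce {s : Set V} {v : s}
    (hv : (G.induce s).IsSimplicialVertex v) (hN : G.neighborSet v ⊆ s) :
    G.IsSimplicialVertex v := by
  intro x hx y hy hxy
  exact hv (x := ⟨x, hN hx⟩) hx (y := ⟨y, hN hy⟩) hy (fun h => hxy (congrArg Subtype.val h))

theorem IsChordal.exists_isSimplicialVertex_notMem [Finite V] (hG : G.IsChordal) {S : Set V}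
    (hS : G.IsClique S) (hSV : ∃ v, v ∉ S) : ∃ v ∉ S, G.IsSimplicialVertex v := by
  induction hn : Nat.card V using Nat.strong_induction_on generalizing V with
  | _ n ih =>
  by_cases hcomplete : ∀ x y, x ≠ y → G.Adj x y
  · obtain ⟨v, hv⟩ := hSV
    exact ⟨v, hv, fun x _ y _ hxy => hcomplete x y hxy⟩
  push Not at hcomplete
  obtain ⟨a, b, hab, hnadj⟩ := hcomplete
  obtain ⟨B, K, hK, hbB, hbK, haBK, hBN⟩ := hG.exists_clique_separator hab hnadj
  have key : ∀ X : Set V, (∀ x ∈ X, G.neighborSet x ⊆ X ∪ K) → (∃ x ∈ X, x ∉ K) →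
      (∃ y, y ∉ X ∪ K) → ∃ u ∈ X, G.IsSimplicialVertex u := by
    rintro X hXN ⟨x, hxX, hxK⟩ ⟨y, hy⟩
    have hcard : Nat.card ↥(X ∪ K) < n :=
      hn ▸ Nat.card_coe_set_eq (X ∪ K) ▸ Set.ncard_lt_card fun h => hy (h ▸ trivial)
    obtain ⟨⟨u, huXK⟩, huK, hu⟩ := ih _ hcard (hG.induce (X ∪ K))
      (isClique_induce_iff.mpr (hK.subset (Set.image_preimage_subset _ K)))
      ⟨⟨x, .inl hxX⟩, hxK⟩ rfl
    have huX : u ∈ X := huXK.resolve_right huK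
    exact ⟨u, huX, hu.of_induce (hXN u huX)⟩
  obtain ⟨u, huB, hu⟩ := key B hBN ⟨b, hbB, hbK⟩ ⟨a, haBK⟩
  have hAN : ∀ x ∈ (B ∪ K)ᶜ, G.neighborSet x ⊆ (B ∪ K)ᶜ ∪ K := by
    intro x hx y hxy
    by_cases hyK : y ∈ K
    · exact .inr hyK
    · exact .inl fun hy => hy.elim (fun hyB => hx (hBN y hyB hxy.symm)) hyK
  obtain ⟨u', hu'A, hu'⟩ := key (B ∪ K)ᶜ hAN ⟨a, haBK, fun h => haBK (.inr h)⟩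
    ⟨b, fun h => h.elim (· (.inl hbB)) hbK⟩
  have hne : u ≠ u' := fun h => hu'A (.inl (h ▸ huB))
  by_cases huS : u ∈ S
  · exact ⟨u', fun hu'S => hu'A (hBN u huB (hS huS hu'S hne)), hu'⟩
  · exact ⟨u, huS, hu⟩

/-- `IsPEO` for an enumeration of any length `n`, so that an induction can shrink `n`. -/
def IsEliminationOrder {n : ℕ} (G : SimpleGraph V) (e : Fin n ≃ V) : Prop :=
  ∀ ⦃i j k⦄, i ≤ j → i ≤ k → j ≠ k → G.Adj (e i) (e j) → G.Adj (e i) (e k) → G.Adj (e j) (e k)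

theorem isPEO_iff_isEliminationOrder [Fintype V] (e : Fin (Fintype.card V) ≃ V) :
    G.IsPEO e ↔ G.IsEliminationOrder e := by
  refine forall_congr' fun i => ⟨fun h j k hij hik hjk hj hk => ?_, ?_⟩
  · exact h (x := ⟨e j, j, hij, rfl⟩) hj (y := ⟨e k, k, hik, rfl⟩) hk
      (by simpa [Subtype.ext_iff] using hjk)
  · rintro h ⟨_, j, hij, rfl⟩ hj ⟨_, k, hik, rfl⟩ hk hjk
    exact h hij hik (by rintro rfl; exact hjk rfl) hj hk

theorem IsEliminationOrder.of_succ {n : ℕ} {v : V} {e : Fin (n + 1) ≃ V}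
    {e' : Fin n ≃ {x | x ≠ v}} (he0 : e 0 = v) (hes : ∀ i, e i.succ = e' i)
    (hv : G.IsSimplicialVertex v) (he' : (G.induce {x | x ≠ v}).IsEliminationOrder e') :
    G.IsEliminationOrder e := by
  intro i j k hij hik hjk
  cases i using Fin.cases with
  | zero =>
    rw [he0]
    exact fun hj hk => hv hj hk (e.injective.ne hjk)
  | succ i =>
    obtain ⟨j, rfl⟩ := Fin.exists_succ_eq.mpr ((Fin.succ_pos i).trans_le hij).ne'
    obtain ⟨k, rfl⟩ := Fin.exists_succ_eq.mpr ((Fin.succ_pos i).trans_le hik).ne'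
    rw [hes, hes, hes]
    exact he' (Fin.succ_le_succ_iff.mp hij) (Fin.succ_le_succ_iff.mp hik) (by simpa using hjk)

theorem IsChordal.exists_isEliminationOrder_clique_last [Finite V] (hG : G.IsChordal)
    {S : Set V} (hS : G.IsClique S) {n : ℕ} (hn : Nat.card V = n) :
    ∃ e : Fin n ≃ V, G.IsEliminationOrder e ∧ ∀ ⦃i j⦄, i ≤ j → e j ∈ Sᶜ → e i ∈ Sᶜ := by
  classical
  induction n generalizing V with
  | zero =>
    have : IsEmpty V := Finite.card_eq_zero_iff.mp hn
    exact ⟨Equiv.equivOfIsEmpty _ _, fun i => i.elim0, fun i => i.elim0⟩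
  | succ n ih =>
    obtain ⟨v, hv, hvS⟩ : ∃ v, G.IsSimplicialVertex v ∧ (v ∈ S → ∀ x, x ∈ S) := by
      by_cases hSV : ∃ v, v ∉ S
      · obtain ⟨v, hvS, hv⟩ := hG.exists_isSimplicialVertex_notMem hS hSV
        exact ⟨v, hv, fun h => (hvS h).elim⟩
      · push Not at hSV
        obtain ⟨v⟩ : Nonempty V := (Nat.card_pos_iff.mp (by omega)).1
        exact ⟨v, hS.subset fun x _ => hSV x, fun _ => hSV⟩
    have hn' : Nat.card {x | x ≠ v} = n := by
      have := Nat.card_congr (Equiv.optionSubtypeNe v : Option {x | x ≠ v} ≃ V)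
      rw [Finite.card_option, hn] at this
      exact Nat.succ_injective this
    obtain ⟨e', he', he'S⟩ := ih (hG.induce {x | x ≠ v})
      (isClique_induce_iff.mpr (hS.subset (Set.image_preimage_subset _ S))) hn'
    obtain ⟨e, he0, hes⟩ := Equiv.exists_extend_fin_succ v e'
    refine ⟨e, he'.of_succ he0 hes hv, fun i j hij hj => ?_⟩
    cases i using Fin.cases with
    | zero => exact he0 ▸ fun hvS' => hj (hvS hvS' _)
    | succ i =>
      obtain ⟨j, rfl⟩ := Fin.exists_succ_eq.mpr ((Fin.succ_pos i).trans_le hij).ne'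
      rw [hes] at hj ⊢
      exact he'S (Fin.succ_le_succ_iff.mp hij) hj

end SimpleGraph

theorem chordal_peo_ending_with_clique {V : Type*} [Fintype V] (G : SimpleGraph V)
    (hG : G.IsChordal) (S : Set V) (hS : G.IsClique S) :
    ∃ e : Fin (Fintype.card V) ≃ V, G.IsPEO e ∧
      ∀ i : Fin (Fintype.card V), e i ∈ Sᶜ ↔ (i : ℕ) < Sᶜ.ncard := by
  obtain ⟨e, he, hSc⟩ := hG.exists_isEliminationOrder_clique_last hS Nat.card_eq_fintype_card
  exact ⟨e, (SimpleGraph.isPEO_iff_isEliminationOrder e).mpr he, e.apply_mem_iff_lt_ncard hSc⟩
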